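/- Let D ≥ 3 and n ≥ 1. Let g_1, …, g_n be i.i.d. standard Gaussian vectors in ℝ^D, and let ω_1, …, ω_n be i.i.d. N(0,1) random variables independent of (g_1, …, g_n). Then for any fixed index a ∈ {1, …, n}, E [ ( Σ_{i ≠ a} (⟨g_i, g_a⟩ / ‖g_i‖²) ω_i )² ] = (n−1)/(D−2). -/

import Mathlib

open MeasureTheory ProbabilityTheory Filter

noncomputable section

/-- Euclidean inner product on `Fin D → ℝ`. -/
def euclDot {D : ℕ} (x y : Fin D → ℝ) : ℝ := ∑ i, x i * y i

/-- Squared Euclidean norm on `Fin n → ℝ`. -/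
def euclNormSq {n : ℕ} (x : Fin n → ℝ) : ℝ := ∑ i, (x i) ^ 2

/-- Euclidean (`ℓ²`) norm on `Fin n → ℝ`. -/
def euclNorm {n : ℕ} (x : Fin n → ℝ) : ℝ := Real.sqrt (euclNormSq x)

/-- Standard Gaussian measure on `Fin D → ℝ`: the coordinates are i.i.d. `N(0,1)`. -/
def stdGaussian (D : ℕ) : Measure (Fin D → ℝ) := Measure.pi fun _ => gaussianReal 0 1

/-- Law of an `N × D` random matrix (viewed as the tuple of its rows) with i.i.d. `N(0,1)`
entries. -/
def stdGaussianMatrix (N D : ℕ) : Measure (Fin N → Fin D → ℝ) :=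
  Measure.pi fun _ => stdGaussian D

/-- The span of the rows of `x` indexed by the subset `A`. -/
def rowSpan {N D : ℕ} (x : Fin N → Fin D → ℝ) (A : Finset (Fin N)) :
    Submodule ℝ (Fin D → ℝ) :=
  Submodule.span ℝ ((fun a => x a) '' (A : Set (Fin N)))

/-- `p` is the orthogonal projection (w.r.t. the Euclidean inner product) of `x`
onto the subspace `S`. -/
def IsOrthProjOn {D : ℕ} (S : Submodule ℝ (Fin D → ℝ)) (x p : Fin D → ℝ) : Prop :=
  p ∈ S ∧ ∀ v ∈ S, euclDot (x - p) v = 0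

/-- `t` is the minimum `ℓ²`-norm solution of the system `⟨x_a, t⟩ = y_a` for `a ∈ A`. -/
def IsMinNormSol {N D : ℕ} (x : Fin N → Fin D → ℝ) (A : Finset (Fin N))
    (yv : Fin N → ℝ) (t : Fin D → ℝ) : Prop :=
  (∀ a ∈ A, euclDot (x a) t = yv a) ∧
  ∀ t' : Fin D → ℝ, (∀ a ∈ A, euclDot (x a) t' = yv a) → euclNorm t ≤ euclNorm t'

/-- The noisy measurement `y = X θ* + ω`. -/
def yMeas {N D : ℕ} (x : Fin N → Fin D → ℝ) (θ : Fin D → ℝ) (w : Fin N → ℝ) : Fin N → ℝ :=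
  fun a => euclDot (x a) θ + w a

/-! Conditionally on the `g_i`, the sum is a linear combination of the independent centred
unit-variance `ω_i`, so its second moment is `∑_{i ≠ a} ⟨g_i, g_a⟩² / ‖g_i‖⁴`. Averaging over
`g_a`, which is independent of `g_i`, turns `⟨g_i, g_a⟩²` into `‖g_i‖²`, so each of the `n - 1`
terms equals `E ‖g‖⁻²`. This moment is computed from `y⁻¹ = ∫₀^∞ e^{-ty} dt` and Tonelli:
`E e^{-t‖g‖²} = (1 + 2t)^{-D/2}`, whose integral over `t > 0` is `1 / (D - 2)` for `D ≥ 3`. -/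

open Real Set Topology

lemma hasLaw_eval_prodMk_pi {ι α : Type*} [Fintype ι] [MeasurableSpace α] (μ : Measure α)
    [IsProbabilityMeasure μ] {i j : ι} (hij : i ≠ j) :
    HasLaw (fun x : ι → α => (x i, x j)) (μ.prod μ) (Measure.pi fun _ => μ) :=
  ((iIndepFun_pi (X := fun _ => id) fun _ => aemeasurable_id).indepFun hij).hasLaw_prod
    (measurePreserving_eval (fun _ => μ) i).hasLaw (measurePreserving_eval (fun _ => μ) j).hasLaw

lemma lintegral_sq_sum_mul_pi {ι : Type*} [Fintype ι] {μ : Measure ℝ} [IsProbabilityMeasure μ]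
    (hμ : MemLp id 2 μ) (hmean : ∫ x, x ∂μ = 0) (hvar : Var[id; μ] = 1)
    (s : Finset ι) (c : ι → ℝ) :
    ∫⁻ w, ENNReal.ofReal ((∑ i ∈ s, c i * w i) ^ 2) ∂Measure.pi (fun _ => μ) =
      ENNReal.ofReal (∑ i ∈ s, c i ^ 2) := by
  set P := Measure.pi fun _ : ι => μ
  set X : ι → (ι → ℝ) → ℝ := fun i w => c i * w i
  have hlaw (i : ι) : HasLaw (fun w : ι → ℝ => w i) μ P :=
    (measurePreserving_eval (fun _ => μ) i).hasLaw
  have hX (i : ι) : MemLp (X i) 2 P :=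
    (hμ.comp_measurePreserving (measurePreserving_eval _ i)).const_mul (c i)
  have hindep : iIndepFun X P := iIndepFun_pi (X := fun i x => c i * x) fun _ => by fun_prop
  have hS : MemLp (∑ i ∈ s, X i) 2 P := memLp_finsetSum' s fun i _ => hX i
  have hcentred : ∫ w, (∑ i ∈ s, X i) w ∂P = 0 := by
    simp_rw [Finset.sum_apply]
    rw [integral_finsetSum _ fun i _ => (hX i).integrable one_le_two]
    refine Finset.sum_eq_zero fun i _ => ?_
    rw [integral_const_mul, (hlaw i).integral_eq, hmean, mul_zero]
  rw [← ofReal_integral_eq_lintegral_ofReal (by simpa [X] using hS.integrable_sq)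
    (ae_of_all _ fun _ => sq_nonneg _)]
  congr 1
  calc ∫ w, (∑ i ∈ s, c i * w i) ^ 2 ∂P = Var[∑ i ∈ s, X i; P] := by
        simp [variance_of_integral_eq_zero hS.aemeasurable hcentred, X]
    _ = ∑ i ∈ s, Var[X i; P] :=
        IndepFun.variance_sum (fun i _ => hX i) fun i _ j _ hij => hindep.indepFun hij
    _ = ∑ i ∈ s, c i ^ 2 := by
        simp_rw [X, variance_const_mul, (hlaw _).variance_eq, hvar, mul_one]

lemma ofReal_inv_eq_lintegral_exp_neg_mul {y : ℝ} (hy : 0 < y) :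
    ENNReal.ofReal y⁻¹ = ∫⁻ t in Ioi 0, ENNReal.ofReal (exp (-t * y)) := by
  have hint : IntegrableOn (fun t => exp (-y * t)) (Ioi 0) :=
    integrableOn_exp_mul_Ioi (neg_neg_of_pos hy) 0
  simp_rw [neg_mul, mul_comm _ y, ← neg_mul]
  rw [← ofReal_integral_eq_lintegral_ofReal hint (ae_of_all _ fun _ => (exp_pos _).le),
    integral_exp_mul_Ioi (neg_neg_of_pos hy)]
  simp

lemma lintegral_Ioi_two_mul_add_one_rpow_neg {p : ℝ} (hp : 1 < p) :
    ∫⁻ t in Ioi 0, ENNReal.ofReal ((2 * t + 1) ^ (-p)) = ENNReal.ofReal (2 * (p - 1))⁻¹ := by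
  have hp' : p - 1 ≠ 0 := by linarith
  set G : ℝ → ℝ := fun t => -(2 * t + 1) ^ (1 - p) / (2 * (p - 1))
  have hderiv : ∀ t ∈ Ici (0 : ℝ), HasDerivAt G ((2 * t + 1) ^ (-p)) t := by
    intro t ht
    have hpos : 0 < 2 * t + 1 := by linarith [mem_Ici.1 ht]
    have h := ((((hasDerivAt_id t).const_mul 2).add_const 1).rpow_const
      (p := 1 - p) (Or.inl hpos.ne')).neg.div_const (2 * (p - 1))
    refine h.congr_deriv ?_
    rw [show 1 - p - 1 = -p by ring, id]
    field_simp
    ring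
  have hnonneg : ∀ t ∈ Ioi (0 : ℝ), 0 ≤ (2 * t + 1) ^ (-p) := fun t ht =>
    rpow_nonneg (by linarith [mem_Ioi.1 ht]) _
  have hlim : Tendsto G atTop (𝓝 0) := by
    have : Tendsto (fun t : ℝ => (2 * t + 1) ^ (1 - p)) atTop (𝓝 0) := by
      rw [show 1 - p = -(p - 1) by ring]
      exact (tendsto_rpow_neg_atTop (by linarith)).comp
        (tendsto_atTop_add_const_right _ 1 (tendsto_id.const_mul_atTop two_pos))
    simpa [G] using this.neg.div_const (2 * (p - 1))
  rw [← ofReal_integral_eq_lintegral_ofReal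
      (integrableOn_Ioi_deriv_of_nonneg' hderiv hnonneg hlim)
      ((ae_restrict_iff' measurableSet_Ioi).2 (ae_of_all _ hnonneg)),
    integral_Ioi_of_hasDerivAt_of_nonneg' hderiv hnonneg hlim]
  congr 1
  simp only [G, mul_zero, zero_add, one_rpow, zero_sub, mul_inv_rev]
  field_simp

lemma integral_exp_neg_mul_sq_gaussianReal {t : ℝ} (ht : 0 < 2 * t + 1) :
    ∫ x, exp (-t * x ^ 2) ∂gaussianReal 0 1 = (2 * t + 1) ^ (-(1 / 2 : ℝ)) := by
  have hexp : ∀ x : ℝ, gaussianPDFReal 0 1 x • exp (-t * x ^ 2)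
      = (√(2 * π))⁻¹ * exp (-(t + 1 / 2) * x ^ 2) := by
    intro x
    rw [gaussianPDFReal_def, smul_eq_mul, mul_assoc, ← exp_add]
    congr 3 <;> push_cast <;> ring
  simp_rw [integral_gaussianReal_eq_integral_smul one_ne_zero, hexp, integral_const_mul,
    integral_gaussian]
  rw [show π / (t + 1 / 2) = 2 * π / (2 * t + 1) by field_simp, sqrt_div' _ ht.le,
    rpow_neg ht.le, ← sqrt_eq_rpow]
  field_simp

@[fun_prop]
lemma Measurable.euclDot {α : Type*} [MeasurableSpace α] {D : ℕ} {f g : α → Fin D → ℝ}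
    (hf : Measurable f) (hg : Measurable g) : Measurable fun x => euclDot (f x) (g x) := by
  unfold _root_.euclDot; fun_prop

@[fun_prop]
lemma Measurable.euclNormSq {α : Type*} [MeasurableSpace α] {D : ℕ} {f : α → Fin D → ℝ}
    (hf : Measurable f) : Measurable fun x => euclNormSq (f x) := by
  unfold _root_.euclNormSq; fun_prop

lemma euclNormSq_nonneg {D : ℕ} (u : Fin D → ℝ) : 0 ≤ euclNormSq u :=
  Finset.sum_nonneg fun _ _ => sq_nonneg _

lemma euclNormSq_pos {D : ℕ} {u : Fin D → ℝ} (hu : u ≠ 0) : 0 < euclNormSq u := by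
  obtain ⟨k, hk⟩ := Function.ne_iff.1 hu
  exact Finset.sum_pos' (fun _ _ => sq_nonneg _) ⟨k, Finset.mem_univ k, sq_pos_iff.2 hk⟩

instance (D : ℕ) : IsProbabilityMeasure (stdGaussian D) := by
  unfold _root_.stdGaussian; infer_instance

instance (N D : ℕ) : IsProbabilityMeasure (stdGaussianMatrix N D) := by
  unfold stdGaussianMatrix; infer_instance

lemma lintegral_sq_sum_mul_stdGaussian {m : ℕ} (s : Finset (Fin m)) (c : Fin m → ℝ) :
    ∫⁻ w, ENNReal.ofReal ((∑ i ∈ s, c i * w i) ^ 2) ∂stdGaussian m =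
      ENNReal.ofReal (∑ i ∈ s, c i ^ 2) :=
  lintegral_sq_sum_mul_pi (memLp_id_gaussianReal 2) integral_id_gaussianReal
    variance_id_gaussianReal s c

lemma integral_exp_neg_mul_euclNormSq_stdGaussian (D : ℕ) {t : ℝ} (ht : 0 < 2 * t + 1) :
    ∫ u, exp (-t * euclNormSq u) ∂stdGaussian D = (2 * t + 1) ^ (-(D / 2 : ℝ)) := by
  have hprod : ∀ u : Fin D → ℝ, exp (-t * euclNormSq u) = ∏ k, exp (-t * u k ^ 2) := by
    intro u
    rw [← exp_sum, euclNormSq, Finset.mul_sum]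
  simp_rw [hprod]
  rw [_root_.stdGaussian, integral_fintype_prod_eq_pow (fun x => exp (-t * x ^ 2)),
    integral_exp_neg_mul_sq_gaussianReal ht, Fintype.card_fin, ← rpow_natCast, ← rpow_mul ht.le]
  ring_nf

lemma lintegral_inv_euclNormSq_stdGaussian {D : ℕ} (hD : 3 ≤ D) :
    ∫⁻ u, ENNReal.ofReal (euclNormSq u)⁻¹ ∂stdGaussian D = ENNReal.ofReal ((D : ℝ) - 2)⁻¹ := by
  have : Nonempty (Fin D) := ⟨⟨0, by omega⟩⟩
  have : NullSingletonClass (stdGaussian D) := by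
    have := nullSingletonClass_gaussianReal (μ := 0) one_ne_zero
    unfold _root_.stdGaussian; infer_instance
  calc ∫⁻ u, ENNReal.ofReal (euclNormSq u)⁻¹ ∂stdGaussian D
      = ∫⁻ u, (∫⁻ t in Ioi 0, ENNReal.ofReal (exp (-t * euclNormSq u))) ∂stdGaussian D :=
        lintegral_congr_ae <| (Measure.ae_ne _ 0).mono fun u hu =>
          ofReal_inv_eq_lintegral_exp_neg_mul (euclNormSq_pos hu)
    _ = ∫⁻ t in Ioi 0, ∫⁻ u, ENNReal.ofReal (exp (-t * euclNormSq u)) ∂stdGaussian D :=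
        lintegral_lintegral_swap (by fun_prop)
    _ = ∫⁻ t in Ioi 0, ENNReal.ofReal ((2 * t + 1) ^ (-(D / 2 : ℝ))) := by
        refine setLIntegral_congr_fun measurableSet_Ioi fun t ht => ?_
        have ht' : 0 < 2 * t + 1 := by linarith [mem_Ioi.1 ht]
        rw [← integral_exp_neg_mul_euclNormSq_stdGaussian D ht',
          ofReal_integral_eq_lintegral_ofReal _ (ae_of_all _ fun _ => (exp_pos _).le)]
        refine Integrable.of_bound (by fun_prop) 1 (ae_of_all _ fun u => ?_)
        rw [norm_of_nonneg (exp_pos _).le, exp_le_one_iff]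
        nlinarith [euclNormSq_nonneg u, mem_Ioi.1 ht]
    _ = ENNReal.ofReal ((D : ℝ) - 2)⁻¹ := by
        have hD' : (3 : ℝ) ≤ D := by exact_mod_cast hD
        rw [lintegral_Ioi_two_mul_add_one_rpow_neg (by linarith)]
        ring_nf

-- At `u = 0` both sides vanish, as `0⁻¹ = 0`.
lemma lintegral_sq_euclDot_div_euclNormSq_stdGaussian {D : ℕ} (u : Fin D → ℝ) :
    ∫⁻ x, ENNReal.ofReal ((euclDot u x / euclNormSq u) ^ 2) ∂stdGaussian D =
      ENNReal.ofReal (euclNormSq u)⁻¹ := by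
  have hdot (x : Fin D → ℝ) : euclDot u x / euclNormSq u = ∑ k, u k / euclNormSq u * x k := by
    simp only [euclDot, Finset.sum_div, div_mul_eq_mul_div]
  simp_rw [hdot, lintegral_sq_sum_mul_stdGaussian, div_pow, ← Finset.sum_div]
  rw [← euclNormSq, sq, div_self_mul_self']

theorem expected_squared_weighted_noise_sum_general (D n : ℕ) (hD : 3 ≤ D) (a : Fin n) :
    ∫⁻ gw, ENNReal.ofReal
        ((∑ i ∈ Finset.univ.erase a,
          (euclDot (gw.1 i) (gw.1 a) / euclNormSq (gw.1 i)) * gw.2 i) ^ 2)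
        ∂((stdGaussianMatrix n D).prod (stdGaussian n)) =
      ENNReal.ofReal (((n : ℝ) - 1) / ((D : ℝ) - 2)) := by
  have hterm (i : Fin n) (hi : i ≠ a) :
      ∫⁻ g, ENNReal.ofReal ((euclDot (g i) (g a) / euclNormSq (g i)) ^ 2)
        ∂stdGaussianMatrix n D = ENNReal.ofReal ((D : ℝ) - 2)⁻¹ := by
    rw [stdGaussianMatrix, (hasLaw_eval_prodMk_pi (stdGaussian D) hi).lintegral_comp
      (f := fun p => ENNReal.ofReal ((euclDot p.1 p.2 / euclNormSq p.1) ^ 2)) (by fun_prop),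
      lintegral_prod _ (by fun_prop)]
    simp_rw [lintegral_sq_euclDot_div_euclNormSq_stdGaussian]
    exact lintegral_inv_euclNormSq_stdGaussian hD
  rw [lintegral_prod _ (by fun_prop)]
  simp_rw [lintegral_sq_sum_mul_stdGaussian, ENNReal.ofReal_sum_of_nonneg fun _ _ => sq_nonneg _]
  rw [lintegral_finsetSum _ fun i _ => by fun_prop,
    Finset.sum_congr rfl fun i hi => hterm i (Finset.ne_of_mem_erase hi), Finset.sum_const,
    Finset.card_erase_of_mem (Finset.mem_univ a), Finset.card_univ, Fintype.card_fin,
    nsmul_eq_mul, ← ENNReal.ofReal_natCast, ← ENNReal.ofReal_mul (Nat.cast_nonneg _),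
    Nat.cast_sub a.pos, div_eq_mul_inv, Nat.cast_one]

/-- Let `D ≥ 3`, `n ≥ 1`, let `g_1, …, g_n` be i.i.d. standard Gaussian
vectors in `ℝ^D` and let `ω_1, …, ω_n` be i.i.d. `N(0,1)` variables independent of the `g_i`.
For any fixed index `a`, `E (∑_{i ≠ a} (⟨g_i, g_a⟩/‖g_i‖²) ω_i)² = (n−1)/(D−2)`. -/
theorem expected_squared_weighted_noise_sum (D n : ℕ) (hD : 3 ≤ D) (hn : 1 ≤ n) (a : Fin n) :
    ∫⁻ gw, ENNReal.ofReal
        ((∑ i ∈ Finset.univ.erase a,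
          (euclDot (gw.1 i) (gw.1 a) / euclNormSq (gw.1 i)) * gw.2 i) ^ 2)
        ∂((stdGaussianMatrix n D).prod (stdGaussian n)) =
      ENNReal.ofReal (((n : ℝ) - 1) / ((D : ℝ) - 2)) :=
  expected_squared_weighted_noise_sum_general D n hD a
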